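/- Let 0 < α < 1 and define for τ > 0, t ∈ ℝ, P^α_τ f(t) = (1/(4^α Γ(α))) ∫₀^∞ τ^{2α} e^{-τ²/(4s)} s^{-1-α} f(t-s) ds. If f(s) = Σ_{k∈ℤ} (−1)^k 1_{(−a^{2k+1}, −a^{2k}]}(s) for some a > 1, then f(a^{2j} s) = (−1)^j f(s) for all j ∈ ℤ and almost every s, and consequently P^α_{a^j} f(0) = (−1)^j P^α_{1} f(0) for all j ∈ ℤ. -/

import Mathlib

open Real MeasureTheory

/-- The one-sided fractional Poisson-type operator. -/
noncomputable def fracPoisson (α τ : ℝ) (f : ℝ → ℝ) (t : ℝ) : ℝ :=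
  (1 / (4 ^ α * Real.Gamma α)) *
    ∫ s in Set.Ioi (0:ℝ), τ ^ (2 * α) * Real.exp (-τ ^ 2 / (4 * s)) / s ^ (1 + α) * f (t - s)

/-!
Dilating `s ↦ a ^ (2 * j) * s` shifts the blocks `(-a ^ (2k+1), -a ^ (2k)]` of `f` by `j`, so it
multiplies `f` by `(-1) ^ j`. On the operator side, the substitution `s = λ² u` in the integral shows
that `P_{λτ}` at `λ² t` equals `P_τ` of the dilated function at `t`; with `λ = a ^ j`, `τ = 1`,
`t = 0` the two facts combine.
-/

open Set

noncomputable def lacunarySign (a s : ℝ) : ℝ :=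
  ∑' k : ℤ, if s ∈ Ioc (-a ^ (2 * k + 1)) (-a ^ (2 * k)) then (-1 : ℝ) ^ k else 0

theorem mul_mem_Ioc_mul_iff {c x y s : ℝ} (hc : 0 < c) :
    c * s ∈ Ioc (c * x) (c * y) ↔ s ∈ Ioc x y := by
  simp only [mem_Ioc, mul_lt_mul_iff_right₀ hc, mul_le_mul_iff_right₀ hc]

theorem lacunarySign_zpow_two_mul {a : ℝ} (ha : a ≠ 0) (j : ℤ) (s : ℝ) :
    lacunarySign a (a ^ (2 * j) * s) = (-1) ^ j * lacunarySign a s := by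
  have hc : 0 < a ^ (2 * j) := (even_two_mul j).zpow_pos ha
  unfold lacunarySign
  rw [← tsum_mul_left, ← (Equiv.addRight j).tsum_eq]
  refine tsum_congr fun k => ?_
  have hshift (m : ℤ) : a ^ (2 * (k + j) + m) = a ^ (2 * j) * a ^ (2 * k + m) := by
    rw [← zpow_add₀ ha]; ring_nf
  have hmem : a ^ (2 * j) * s ∈ Ioc (-a ^ (2 * (k + j) + 1)) (-a ^ (2 * (k + j))) ↔
      s ∈ Ioc (-a ^ (2 * k + 1)) (-a ^ (2 * k)) := by
    have h0 := hshift 0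
    simp only [add_zero] at h0
    rw [hshift, h0, ← mul_neg, ← mul_neg, mul_mem_Ioc_mul_iff hc]
  rw [Equiv.coe_addRight, if_congr hmem rfl rfl, zpow_add₀ (by norm_num : (-1 : ℝ) ≠ 0), mul_ite,
    mul_zero, mul_comm ((-1 : ℝ) ^ j)]

theorem fracPoisson_mul_dilate {α τ l : ℝ} (f : ℝ → ℝ) (t : ℝ) (hl : 0 < l) (hτ : 0 ≤ τ) :
    fracPoisson α (l * τ) f (l ^ 2 * t) = fracPoisson α τ (fun s => f (l ^ 2 * s)) t := by
  unfold fracPoisson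
  congr 1
  set c := l ^ 2 with hc_def
  have hc : 0 < c := by positivity
  have hsub := integral_comp_mul_left_Ioi
    (fun s => (l * τ) ^ (2 * α) * exp (-(l * τ) ^ 2 / (4 * s)) / s ^ (1 + α) * f (c * t - s)) 0 hc
  rw [mul_zero, smul_eq_mul, eq_inv_mul_iff_mul_eq₀ hc.ne'] at hsub
  rw [← hsub, ← integral_const_mul]
  refine setIntegral_congr_fun measurableSet_Ioi fun x (hx : 0 < x) => ?_
  have hpow : (l * τ) ^ (2 * α) = c ^ α * τ ^ (2 * α) := by
    rw [mul_rpow hl.le hτ, rpow_mul hl.le, rpow_two]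
  have hexp : -(l * τ) ^ 2 / (4 * (c * x)) = -τ ^ 2 / (4 * x) := by
    rw [hc_def]; field_simp
  have hden : (c * x) ^ (1 + α) = c * c ^ α * x ^ (1 + α) := by
    rw [mul_rpow hc.le hx.le, rpow_add hc, rpow_one]
  have hcα : c ^ α ≠ 0 := (rpow_pos_of_pos hc α).ne'
  have hxα : x ^ (1 + α) ≠ 0 := (rpow_pos_of_pos hx _).ne'
  simp only [hpow, hexp, hden, ← mul_sub]
  field_simp

theorem fracPoisson_const_mul (α τ c : ℝ) (f : ℝ → ℝ) (t : ℝ) :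
    fracPoisson α τ (fun s => c * f s) t = c * fracPoisson α τ f t := by
  unfold fracPoisson
  rw [← integral_const_mul, ← integral_const_mul, ← integral_const_mul]
  congr 1; ext s; ring

theorem stmt_12 (α a : ℝ) (ha : 1 < a)
    (f : ℝ → ℝ)
    (hf : ∀ s, f s = ∑' k : ℤ,
        if s ∈ Set.Ioc (-a ^ (2 * k + 1)) (-a ^ (2 * k)) then ((-1 : ℝ)) ^ k else 0) :
    (∀ (j : ℤ) (s : ℝ), f (a ^ (2 * j) * s) = ((-1 : ℝ)) ^ j * f s) ∧
    (∀ j : ℤ, fracPoisson α (a ^ j) f 0 = ((-1 : ℝ)) ^ j * fracPoisson α 1 f 0) := by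
  obtain rfl : f = lacunarySign a := funext hf
  have ha0 : 0 < a := one_pos.trans ha
  have hscale := lacunarySign_zpow_two_mul ha0.ne'
  refine ⟨hscale, fun j => ?_⟩
  have hsq : (a ^ j) ^ 2 = a ^ (2 * j) := by rw [mul_comm, zpow_mul]; norm_cast
  calc fracPoisson α (a ^ j) (lacunarySign a) 0
      = fracPoisson α (a ^ j * 1) (lacunarySign a) ((a ^ j) ^ 2 * 0) := by simp
    _ = fracPoisson α 1 (fun s => lacunarySign a ((a ^ j) ^ 2 * s)) 0 :=
      fracPoisson_mul_dilate _ _ (zpow_pos ha0 j) zero_le_one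
    _ = fracPoisson α 1 (fun s => (-1) ^ j * lacunarySign a s) 0 := by simp only [hsq, hscale]
    _ = (-1) ^ j * fracPoisson α 1 (lacunarySign a) 0 := fracPoisson_const_mul ..
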